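/- arXiv:0901.1695 — 4 statements merged into one kernel-verified Lean document; each statement's English description precedes it below -/
import Mathlib

section
/- Let G be an abelian group, A, B ⊆ G nonempty finite sets, p ∈ ℤ, and K ∈ ℝ with K ≥ 1. If |A + B| ≤ K·|A|^{1/2}·|B|^{1/2}, then |p·A + B| ≤ K^{2|p|+3}·|A|^{1/2}·|B|^{1/2}. -/
/-!
Ruzsa's triangle inequality gives `|p • A + B| |A| ≤ |p • A + A| |A + B|`, and `p • A + A` is a
difference `m • A - k • A` of iterated sumsets with `m + k = |p| + 1`, so the Plünnecke–Ruzsa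
inequality bounds it by `|A + B|^(|p|+1) / |B|^|p|`. Hence `|p • A + B| |A| |B|^|p|` is at most
`|A + B|^(|p|+2) ≤ (K √|A| √|B|)^(|p|+2)`. The leftover factor `(√|A| / √|B|)^(|p|-1)` is
controlled by `√|A| ≤ K √|B|` and `√|B| ≤ K √|A|`, both consequences of `|A|, |B| ≤ |A + B|`.
-/

open Pointwise

namespace Finset

variable {G : Type*} [AddCommGroup G] [DecidableEq G]

theorem zsmul_add_self_eq_nsmul_sub_nsmul (A : Finset G) (p : ℤ) :
    p • A + A = (p.toNat + 1) • A - (-p).toNat • A := by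
  obtain ⟨n, rfl | rfl⟩ := Int.eq_nat_or_neg p
  · simp [succ_nsmul]
  · simp [sub_eq_add_neg, add_comm]

theorem card_nsmul_sub_nsmul_mul_pow_le {B : Finset G} (hB : B.Nonempty) (A : Finset G)
    (m n : ℕ) : #(m • A - n • A) * #B ^ (m + n) ≤ #(A + B) ^ (m + n) * #B := by
  have hPR := pluennecke_ruzsa_inequality_nsmul_sub_nsmul_add hB A m n
  have hB' : (0 : ℚ≥0) < #B := by exact_mod_cast hB.card_pos
  rw [div_pow, div_mul_eq_mul_div, le_div_iff₀ (by positivity), add_comm B] at hPR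
  exact_mod_cast hPR

theorem card_zsmul_add_self_mul_pow_le {B : Finset G} (hB : B.Nonempty) (A : Finset G) (p : ℤ) :
    #(p • A + A) * #B ^ p.natAbs ≤ #(A + B) ^ (p.natAbs + 1) := by
  have h := card_nsmul_sub_nsmul_mul_pow_le hB A (p.toNat + 1) (-p).toNat
  rw [← zsmul_add_self_eq_nsmul_sub_nsmul, add_right_comm, Int.toNat_add_toNat_neg_eq_natAbs,
    pow_succ, pow_succ, ← mul_assoc] at h
  exact Nat.le_of_mul_le_mul_right h hB.card_pos

theorem card_zsmul_add_mul_card_mul_pow_le {A B : Finset G} (hB : B.Nonempty) (p : ℤ) :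
    #(p • A + B) * #A * #B ^ p.natAbs ≤ #(A + B) ^ (p.natAbs + 2) :=
  calc #(p • A + B) * #A * #B ^ p.natAbs
      ≤ #(p • A + A) * #(A + B) * #B ^ p.natAbs := by
        gcongr ?_ * _; exact ruzsa_triangle_inequality_add_add_add _ _ _
    _ = #(p • A + A) * #B ^ p.natAbs * #(A + B) := by ring
    _ ≤ #(A + B) ^ (p.natAbs + 1) * #(A + B) := by
        gcongr ?_ * _; exact card_zsmul_add_self_mul_pow_le hB A p
    _ = #(A + B) ^ (p.natAbs + 2) := by ring

end Finset

-- The case `n = 0`, which needs `t ≤ K * s`, forces the exponent `2 * n + 3`; for `n ≥ 1`,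
-- `2 * n + 1` would do.
theorem pow_mul_pow_le_of_le_mul_of_le_mul {s t K : ℝ} (n : ℕ) (hs : 0 < s) (ht : 0 < t)
    (hK : 1 ≤ K) (hst : s ≤ K * t) (hts : t ≤ K * s) :
    (K * s * t) ^ (n + 2) ≤ K ^ (2 * n + 3) * s * t * (s ^ 2 * (t ^ 2) ^ n) := by
  cases n with
  | zero =>
    calc (K * s * t) ^ (0 + 2) = K ^ 2 * s ^ 2 * t * t := by ring
      _ ≤ K ^ 2 * s ^ 2 * t * (K * s) := by gcongr
      _ = K ^ (2 * 0 + 3) * s * t * (s ^ 2 * (t ^ 2) ^ 0) := by ring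
  | succ m =>
    calc (K * s * t) ^ (m + 1 + 2) = K ^ (m + 3) * s ^ m * (s ^ 3 * t ^ (m + 3)) := by ring
      _ ≤ K ^ (m + 3) * (K * t) ^ m * (s ^ 3 * t ^ (m + 3)) := by gcongr
      _ = K ^ (2 * m + 3) * s * t * (s ^ 2 * (t ^ 2) ^ (m + 1)) := by ring
      _ ≤ K ^ (2 * (m + 1) + 3) * s * t * (s ^ 2 * (t ^ 2) ^ (m + 1)) := by
        gcongr; omega

theorem le_pow_mul_of_mul_sq_mul_pow_le {T s t c K : ℝ} (n : ℕ) (hs : 0 < s) (ht : 0 < t)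
    (hK : 1 ≤ K) (hT : T * (s ^ 2 * (t ^ 2) ^ n) ≤ c ^ (n + 2)) (hc : c ≤ K * s * t)
    (hsc : s ^ 2 ≤ c) (htc : t ^ 2 ≤ c) : T ≤ K ^ (2 * n + 3) * s * t := by
  have hst : s ≤ K * t := le_of_mul_le_mul_left (by nlinarith) hs
  have hts : t ≤ K * s := le_of_mul_le_mul_left (by nlinarith) ht
  refine le_of_mul_le_mul_right ?_ (by positivity : 0 < s ^ 2 * (t ^ 2) ^ n)
  calc T * (s ^ 2 * (t ^ 2) ^ n) ≤ c ^ (n + 2) := hT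
    _ ≤ (K * s * t) ^ (n + 2) := by gcongr; exact (sq_nonneg s).trans hsc
    _ ≤ _ := pow_mul_pow_le_of_le_mul_of_le_mul n hs ht hK hst hts

/-- Strengthened dilation lemma for `q = 1`: if `|A + B| ≤ K |A|^{1/2} |B|^{1/2}`
then `|p·A + B| ≤ K^{2|p|+3} |A|^{1/2} |B|^{1/2}`, where `p·A = {pa : a ∈ A}`. -/
theorem dilate_sumset_bound_q_one {G : Type*} [AddCommGroup G] [DecidableEq G]
    (A B : Finset G) (hA : A.Nonempty) (hB : B.Nonempty)
    (p : ℤ) (K : ℝ) (hK : 1 ≤ K)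
    (h : ((A + B).card : ℝ) ≤
      K * (A.card : ℝ) ^ ((1 : ℝ) / 2) * (B.card : ℝ) ^ ((1 : ℝ) / 2)) :
    ((p • A + B).card : ℝ) ≤
      K ^ (2 * |p| + 3) *
        (A.card : ℝ) ^ ((1 : ℝ) / 2) * (B.card : ℝ) ^ ((1 : ℝ) / 2) := by
  rw [← Real.sqrt_eq_rpow, ← Real.sqrt_eq_rpow] at h ⊢
  have hexp : 2 * |p| + 3 = ((2 * p.natAbs + 3 : ℕ) : ℤ) := by push_cast; rw [Int.abs_eq_natAbs]
  rw [hexp, zpow_natCast]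
  have hsA : √(A.card : ℝ) ^ 2 = A.card := Real.sq_sqrt (Nat.cast_nonneg _)
  have hsB : √(B.card : ℝ) ^ 2 = B.card := Real.sq_sqrt (Nat.cast_nonneg _)
  refine le_pow_mul_of_mul_sq_mul_pow_le p.natAbs (by positivity) (by positivity) hK ?_ h ?_ ?_
  · rw [hsA, hsB, ← mul_assoc]
    exact_mod_cast Finset.card_zsmul_add_mul_card_mul_pow_le hB p
  · rw [hsA]; exact_mod_cast Finset.card_le_card_add_right hB
  · rw [hsB]; exact_mod_cast Finset.card_le_card_add_left hA
end

section
/- Let G be an abelian group and A, B ⊆ G finite nonempty sets with |A| ≥ |B|. Let X, Y be independent random variables uniform on A and B respectively, and suppose H(X + Y) ≤ (1 + ε)·log₂|A| for some ε > 0. Then for every c > 1 there exists a set F ⊆ A × B such that |F| ≥ |A|·|B|·(c−1)/c and |A +_F B| ≤ |A|^{1+cε} = (|A|^{1/2+cε}·|B|^{−1/2})·|A|^{1/2}·|B|^{1/2}. -/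
/-!
Write `p(s) = T(s)/(|A||B|)`. Since `T(s) ≤ |B|`, the entropy splits as
`H(X+Y) = log₂|A| + ∑ₛ p(s) log₂(|B|/T(s))` with nonnegative summands, so the hypothesis bounds the
weighted sum by `ε log₂|A|`. On the sums with `T(s) < |B|/|A|^{cε}` the summand's logarithm exceeds
`cε log₂|A|`, so by Markov's inequality these sums carry mass at most `1/c`. Let `F` be the pairs whose
sum is not of this kind. Each sum of `F` has at least `|B|/|A|^{cε}` of the `|A||B|` representations,
so there are at most `|A|^{1+cε}` of them.
-/

open Pointwise

theorem mul_sum_le_one_of_sum_mul_le {ι : Type*} {S L : Finset ι} {w Z : ι → ℝ} {X c : ℝ}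
    (hLS : L ⊆ S) (hw : ∀ s ∈ S, 0 < w s) (hZ : ∀ s ∈ S, 0 ≤ Z s)
    (hX : ∑ s ∈ S, w s * Z s ≤ X) (hL : ∀ s ∈ L, c * X < Z s) :
    c * ∑ s ∈ L, w s ≤ 1 := by
  have hLX : ∑ s ∈ L, w s * Z s ≤ X :=
    (Finset.sum_le_sum_of_subset_of_nonneg hLS fun s hs _ =>
      mul_nonneg (hw s hs).le (hZ s hs)).trans hX
  rcases L.eq_empty_or_nonempty with rfl | hne
  · simp
  have hX0 : 0 ≤ X :=
    (Finset.sum_nonneg fun s hs => mul_nonneg (hw s (hLS hs)).le (hZ s (hLS hs))).trans hLX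
  have hlt : (c * ∑ s ∈ L, w s) * X < X := by
    calc (c * ∑ s ∈ L, w s) * X = ∑ s ∈ L, w s * (c * X) := by
          rw [Finset.mul_sum, Finset.sum_mul]
          exact Finset.sum_congr rfl fun _ _ => by ring
      _ < ∑ s ∈ L, w s * Z s :=
        Finset.sum_lt_sum_of_nonempty hne fun s hs =>
          mul_lt_mul_of_pos_left (hL s hs) (hw s (hLS hs))
      _ ≤ X := hLX
  have hXpos : 0 < X := hX0.lt_of_ne fun h => by simp [← h] at hlt
  exact ((mul_lt_iff_lt_one_left hXpos).mp hlt).le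

namespace GIFC

variable {G : Type*} [AddCommGroup G] [DecidableEq G]

/-- `T(s) = {(a,b) ∈ A × B : a + b = s}`: the number of representations of `s`
as a sum of an element of `A` and an element of `B`. -/
def repCount (A B : Finset G) (s : G) : ℕ :=
  ((A ×ˢ B).filter fun ab => ab.1 + ab.2 = s).card

/-- The Shannon entropy (in bits) of `X + Y` where `X, Y` are independent and
uniform on `A` and `B` respectively:
`H(X+Y) = -∑_{s ∈ A+B} (|T(s)|/(|A||B|)) log₂(|T(s)|/(|A||B|))`. -/
noncomputable def entropySum (A B : Finset G) : ℝ :=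
  -∑ s ∈ A + B,
      ((repCount A B s : ℝ) / ((A.card : ℝ) * B.card)) *
        Real.logb 2 ((repCount A B s : ℝ) / ((A.card : ℝ) * B.card))

theorem card_filter_add_eq_sum_repCount (A B : Finset G) (P : G → Prop) [DecidablePred P] :
    ((A ×ˢ B).filter fun ab => P (ab.1 + ab.2)).card =
      ∑ s ∈ (A + B).filter P, repCount A B s := by
  rw [Finset.card_eq_sum_card_fiberwise (f := fun ab => ab.1 + ab.2) (t := (A + B).filter P)]
  · refine Finset.sum_congr rfl fun s hs => ?_
    rw [repCount, Finset.filter_filter]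
    congr 1
    refine Finset.filter_congr fun ab _ => ?_
    simp only [and_iff_right_iff_imp]
    rintro rfl
    exact (Finset.mem_filter.mp hs).2
  · intro ab hab
    simp only [Finset.mem_coe, Finset.mem_filter, Finset.mem_product] at hab ⊢
    exact ⟨Finset.add_mem_add hab.1.1 hab.1.2, hab.2⟩

theorem image_filter_add_subset (A B : Finset G) (P : G → Prop) [DecidablePred P] :
    ((A ×ˢ B).filter fun ab => P (ab.1 + ab.2)).image (fun ab => ab.1 + ab.2) ⊆
      (A + B).filter P := by
  intro s hs
  obtain ⟨⟨a, b⟩, hab, rfl⟩ := Finset.mem_image.mp hs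
  simp only [Finset.mem_filter, Finset.mem_product] at hab ⊢
  exact ⟨Finset.add_mem_add hab.1.1 hab.1.2, hab.2⟩

theorem sum_repCount (A B : Finset G) :
    ∑ s ∈ A + B, repCount A B s = A.card * B.card := by
  simpa using (card_filter_add_eq_sum_repCount A B fun _ => True).symm

theorem repCount_le_card_right (A B : Finset G) (s : G) : repCount A B s ≤ B.card := by
  refine Finset.card_le_card_of_injOn Prod.snd (fun ab hab => ?_) fun ab hab ab' hab' h => ?_
  · simp only [Finset.mem_coe, Finset.mem_filter, Finset.mem_product] at hab
    exact hab.1.2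
  · simp only [Finset.mem_coe, Finset.mem_filter] at hab hab'
    have h1 : ab.1 = ab'.1 := add_right_cancel (hab.2.trans (h ▸ hab'.2.symm))
    exact Prod.ext h1 h

theorem repCount_pos {A B : Finset G} {s : G} (hs : s ∈ A + B) : 0 < repCount A B s := by
  obtain ⟨a, ha, b, hb, rfl⟩ := Finset.mem_add.mp hs
  exact Finset.card_pos.mpr ⟨(a, b), by simp [ha, hb]⟩

theorem card_filter_le_repCount_mul_le (A B : Finset G) (t : ℝ) :
    (((A + B).filter fun s => t ≤ repCount A B s).card : ℝ) * t ≤ A.card * B.card := by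
  calc (((A + B).filter fun s => t ≤ repCount A B s).card : ℝ) * t
      ≤ ∑ s ∈ (A + B).filter (fun s => t ≤ repCount A B s), (repCount A B s : ℝ) := by
        rw [← nsmul_eq_mul]
        exact Finset.card_nsmul_le_sum _ _ _ fun s hs => (Finset.mem_filter.mp hs).2
    _ ≤ ∑ s ∈ A + B, (repCount A B s : ℝ) :=
        Finset.sum_le_sum_of_subset_of_nonneg (Finset.filter_subset _ _) fun _ _ _ => by positivity
    _ = A.card * B.card := by exact_mod_cast sum_repCount A B

theorem entropySum_eq_logb_add (A B : Finset G) (hA : A.Nonempty) (hB : B.Nonempty) :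
    entropySum A B = Real.logb 2 A.card + ∑ s ∈ A + B,
      (repCount A B s : ℝ) / (A.card * B.card) * Real.logb 2 (B.card / repCount A B s) := by
  have hnA : (0 : ℝ) < A.card := by exact_mod_cast hA.card_pos
  have hnB : (0 : ℝ) < B.card := by exact_mod_cast hB.card_pos
  have hmass : ∑ s ∈ A + B, (repCount A B s : ℝ) / (A.card * B.card) = 1 := by
    rw [← Finset.sum_div, div_eq_one_iff_eq (by positivity)]
    exact_mod_cast sum_repCount A B
  rw [entropySum, ← one_mul (Real.logb 2 _), ← hmass, Finset.sum_mul, ← Finset.sum_add_distrib,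
    ← Finset.sum_neg_distrib]
  refine Finset.sum_congr rfl fun s hs => ?_
  have hT : (0 : ℝ) < repCount A B s := by exact_mod_cast repCount_pos hs
  rw [Real.logb_div hT.ne' (by positivity), Real.logb_div hnB.ne' hT.ne',
    Real.logb_mul hnA.ne' hnB.ne']
  ring

theorem mul_sum_repCount_filter_lt_le (A B : Finset G) (hA : A.Nonempty) (hB : B.Nonempty)
    {ε : ℝ} (hH : entropySum A B ≤ (1 + ε) * Real.logb 2 A.card) (c : ℝ) :
    c * ∑ s ∈ (A + B).filter (fun s => (repCount A B s : ℝ) < B.card / A.card ^ (c * ε)),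
      (repCount A B s : ℝ) ≤ A.card * B.card := by
  have hnA : (0 : ℝ) < A.card := by exact_mod_cast hA.card_pos
  have hnB : (0 : ℝ) < B.card := by exact_mod_cast hB.card_pos
  have hT : ∀ s ∈ A + B, (0 : ℝ) < repCount A B s := fun s hs => by
    exact_mod_cast repCount_pos hs
  have hmarkov := mul_sum_le_one_of_sum_mul_le (Finset.filter_subset
    (fun s => (repCount A B s : ℝ) < B.card / A.card ^ (c * ε)) (A + B))
    (w := fun s => (repCount A B s : ℝ) / (A.card * B.card))
    (Z := fun s => Real.logb 2 (B.card / repCount A B s)) (X := ε * Real.logb 2 A.card) (c := c)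
    (fun s hs => div_pos (hT s hs) (by positivity))
    (fun s hs => Real.logb_nonneg one_lt_two <| (one_le_div (hT s hs)).mpr <| by
      exact_mod_cast repCount_le_card_right A B s)
    (by rw [entropySum_eq_logb_add A B hA hB] at hH; linarith)
    (fun s hs => by
      obtain ⟨hs, hlight⟩ := Finset.mem_filter.mp hs
      have hpow : (A.card : ℝ) ^ (c * ε) < B.card / repCount A B s := by
        rwa [lt_div_iff₀ (hT s hs), mul_comm, ← lt_div_iff₀ (by positivity)]
      rw [← mul_assoc, ← Real.logb_rpow_eq_mul_logb_of_pos hnA]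
      exact Real.logb_lt_logb one_lt_two (by positivity) hpow)
  rwa [← Finset.sum_div, mul_div_assoc', div_le_one (by positivity)] at hmarkov

theorem exists_large_partial_sumset_general (A B : Finset G)
    (hA : A.Nonempty) (hB : B.Nonempty)
    (ε : ℝ)
    (hH : entropySum A B ≤ (1 + ε) * Real.logb 2 (A.card : ℝ))
    (c : ℝ) (hc : 1 < c) :
    ∃ F ⊆ A ×ˢ B,
      (A.card : ℝ) * (B.card : ℝ) * ((c - 1) / c) ≤ (F.card : ℝ) ∧
      (((F.image fun ab => ab.1 + ab.2).card : ℝ) ≤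
        (A.card : ℝ) ^ (1 + c * ε)) := by
  have hnA : (0 : ℝ) < A.card := by exact_mod_cast hA.card_pos
  set t : ℝ := B.card / A.card ^ (c * ε) with ht
  refine ⟨(A ×ˢ B).filter fun ab => t ≤ repCount A B (ab.1 + ab.2), Finset.filter_subset _ _, ?_, ?_⟩
  · have hsplit := Finset.card_filter_add_card_filter_not (s := A ×ˢ B)
      fun ab => t ≤ repCount A B (ab.1 + ab.2)
    simp_rw [not_le, card_filter_add_eq_sum_repCount A B fun s => (repCount A B s : ℝ) < t,
      Finset.card_product] at hsplit
    have hlight := mul_sum_repCount_filter_lt_le A B hA hB hH c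
    have hsplit' := congrArg (Nat.cast : ℕ → ℝ) hsplit
    push_cast at hsplit'
    rw [mul_div_assoc', div_le_iff₀ (by linarith)]
    nlinarith
  · calc _ ≤ (((A + B).filter fun s => t ≤ repCount A B s).card : ℝ) := by
          exact_mod_cast Finset.card_le_card
            (image_filter_add_subset A B fun s => t ≤ repCount A B s)
      _ ≤ A.card * B.card / t := (le_div_iff₀ (by positivity)).mpr
          (card_filter_le_repCount_mul_le A B t)
      _ = A.card ^ (1 + c * ε) := by
          rw [ht, Real.rpow_add hnA, Real.rpow_one]
          field_simp

/-- Lemma 6 of the paper: if `X, Y` are independent uniform on `A, B` with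
`|A| ≥ |B|` and `H(X+Y) ≤ (1+ε) log₂ |A|`, then for every `c > 1` there is a
`F ⊆ A × B` with `|F| ≥ |A||B|(c-1)/c` whose partial sum set
`A +_F B = {a + b : (a,b) ∈ F}` has at most `|A|^{1+cε}` elements. -/
theorem exists_large_partial_sumset (A B : Finset G)
    (hA : A.Nonempty) (hB : B.Nonempty) (hBA : B.card ≤ A.card)
    (ε : ℝ) (hε : 0 < ε)
    (hH : entropySum A B ≤ (1 + ε) * Real.logb 2 (A.card : ℝ))
    (c : ℝ) (hc : 1 < c) :
    ∃ F ⊆ A ×ˢ B,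
      (A.card : ℝ) * (B.card : ℝ) * ((c - 1) / c) ≤ (F.card : ℝ) ∧
      (((F.image fun ab => ab.1 + ab.2).card : ℝ) ≤
        (A.card : ℝ) ^ (1 + c * ε)) :=
  exists_large_partial_sumset_general A B hA hB ε hH c hc

end GIFC
end

section
/- Let X = (X₁,…,Xₙ) be a random vector taking finitely many values in ℤⁿ. Then its Shannon entropy satisfies H(X) ≤ (n/2)·log₂[2πe·((1/n)·Σ_{i=1}^n Var(Xᵢ) + 1/12)], where Var(Xᵢ) = E(Xᵢ²) − (E Xᵢ)² and entropy is measured in bits. -/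
/-!
By subadditivity of entropy (Gibbs' inequality against the product of the marginals),
`H(X) ≤ ∑ᵢ H(Xᵢ)`. For a single integer variable `Z` with mean `μ` and variance `σ²`, compare
the probability `q m` of `Z = m` with the mass that the Gaussian density `g` of mean `μ + 1/2`
and variance `σ² + 1/12` puts on `[m, m + 1]`: Gibbs' inequality gives
`H(Z) ≤ -∑ₘ q m ∫_m^{m+1} log g`, and this cross entropy is exactly
`(1/2) log (2πe(σ² + 1/12))`. Concavity of `log` then turns the sum of the coordinate bounds into
the bound for the average variance.
-/

open Real Finset MeasureTheory ProbabilityTheory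
open scoped NNReal

lemma sum_mul_sq_sub_sq_sum_mul {ι : Type*} (s : Finset ι) (w f : ι → ℝ)
    (hw : ∑ i ∈ s, w i = 1) :
    ∑ i ∈ s, w i * f i ^ 2 - (∑ i ∈ s, w i * f i) ^ 2 =
      ∑ i ∈ s, w i * (f i - ∑ j ∈ s, w j * f j) ^ 2 := by
  set μ := ∑ j ∈ s, w j * f j
  have hexpand : ∀ i ∈ s, w i * (f i - μ) ^ 2 = w i * f i ^ 2 - 2 * μ * (w i * f i) + μ ^ 2 * w i :=
    fun i _ => by ring
  rw [sum_congr rfl hexpand, sum_add_distrib, sum_sub_distrib, ← mul_sum, ← mul_sum, hw]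
  ring

lemma sum_mul_sq_sub_sq_sum_mul_nonneg {ι : Type*} (s : Finset ι) (w f : ι → ℝ)
    (hw0 : ∀ i ∈ s, 0 ≤ w i) (hw : ∑ i ∈ s, w i = 1) :
    0 ≤ ∑ i ∈ s, w i * f i ^ 2 - (∑ i ∈ s, w i * f i) ^ 2 := by
  rw [sum_mul_sq_sub_sq_sum_mul s w f hw]
  exact sum_nonneg fun i hi => mul_nonneg (hw0 i hi) (sq_nonneg _)

lemma negMulLog_add_mul_log_le_sub {p q : ℝ} (hp : 0 ≤ p) (hq : 0 ≤ q) (hpq : q = 0 → p = 0) :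
    negMulLog p + p * log q ≤ q - p := by
  rcases hp.eq_or_lt with rfl | hp
  · simpa using hq
  have hq : 0 < q := hq.lt_of_ne fun h => hp.ne' (hpq h.symm)
  have h := mul_le_mul_of_nonneg_left (log_le_sub_one_of_pos (div_pos hq hp)) hp.le
  rw [log_div hq.ne' hp.ne', mul_sub, mul_sub, mul_one, mul_div_cancel₀ _ hp.ne'] at h
  rw [negMulLog]
  linarith

lemma sum_intervalIntegral_unit_le_integral {g : ℝ → ℝ} (hg0 : 0 ≤ g) (hg : Integrable g)
    (T : Finset ℤ) : ∑ m ∈ T, ∫ x in (m : ℝ)..m + 1, g x ≤ ∫ x, g x := by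
  have h := hg.hasSum_intervalIntegral 0
  simp only [zero_add] at h
  exact sum_le_hasSum T
    (fun m _ => intervalIntegral.integral_nonneg (by linarith) fun x _ => hg0 x) h

lemma integral_sub_sq_unit_interval (m c : ℝ) :
    ∫ x in m..m + 1, (x - c) ^ 2 = (m + 1 / 2 - c) ^ 2 + 1 / 12 := by
  rw [intervalIntegral.integral_comp_sub_right (fun x => x ^ 2) c, integral_pow]
  ring

lemma neg_log_gaussianPDFReal (μ : ℝ) {v : ℝ≥0} (hv : v ≠ 0) (x : ℝ) :
    -log (gaussianPDFReal μ v x) = log (2 * π * v) / 2 + (x - μ) ^ 2 / (2 * v) := by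
  have : (0 : ℝ) < v := by positivity
  rw [gaussianPDFReal, log_mul (by positivity) (exp_ne_zero _), log_inv, log_exp,
    log_sqrt (by positivity)]
  ring

lemma continuous_gaussianPDFReal (μ : ℝ) (v : ℝ≥0) : Continuous (gaussianPDFReal μ v) := by
  rw [gaussianPDFReal_def]
  fun_prop

lemma sum_negMulLog_le_sum_mul_integral_neg_log {g : ℝ → ℝ} (hg : Continuous g)
    (hg0 : ∀ x, 0 < g x) (hgi : Integrable g) (hg1 : ∫ x, g x ≤ 1) {T : Finset ℤ} {q : ℤ → ℝ}
    (hq0 : ∀ m ∈ T, 0 ≤ q m) (hq1 : ∑ m ∈ T, q m = 1) :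
    ∑ m ∈ T, negMulLog (q m) ≤ ∑ m ∈ T, q m * ∫ x in (m : ℝ)..m + 1, -log (g x) := by
  have hlog : Continuous fun x => log (g x) := hg.log fun x => (hg0 x).ne'
  have hcell : ∀ m ∈ T, negMulLog (q m) - q m * ∫ x in (m : ℝ)..m + 1, -log (g x) ≤
      (∫ x in (m : ℝ)..m + 1, g x) - q m := by
    intro m hm
    have h : ∫ x in (m : ℝ)..m + 1, (negMulLog (q m) + q m * log (g x)) ≤
        ∫ x in (m : ℝ)..m + 1, (g x - q m) :=
      intervalIntegral.integral_mono_on (by linarith)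
        ((continuous_const.add (continuous_const.mul hlog)).intervalIntegrable _ _)
        ((hg.sub continuous_const).intervalIntegrable _ _) fun x _ =>
          negMulLog_add_mul_log_le_sub (hq0 m hm) (hg0 x).le fun h => absurd h (hg0 x).ne'
    rw [intervalIntegral.integral_add intervalIntegrable_const
        ((hlog.intervalIntegrable _ _).const_mul (q m)),
      intervalIntegral.integral_sub (hg.intervalIntegrable _ _) intervalIntegrable_const,
      intervalIntegral.integral_const_mul] at h
    simpa [intervalIntegral.integral_neg] using h
  have hsum := sum_le_sum hcell
  rw [sum_sub_distrib, sum_sub_distrib, hq1] at hsum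
  linarith [sum_intervalIntegral_unit_le_integral (fun x => (hg0 x).le) hgi T]

theorem sum_negMulLog_le_half_log_variance {T : Finset ℤ} {q : ℤ → ℝ}
    (hq0 : ∀ m ∈ T, 0 ≤ q m) (hq1 : ∑ m ∈ T, q m = 1) :
    ∑ m ∈ T, negMulLog (q m) ≤ 1 / 2 * log (2 * π * exp 1 *
      (∑ m ∈ T, q m * (m : ℝ) ^ 2 - (∑ m ∈ T, q m * (m : ℝ)) ^ 2 + 1 / 12)) := by
  set μ := ∑ m ∈ T, q m * (m : ℝ)
  set σ2 := ∑ m ∈ T, q m * (m : ℝ) ^ 2 - μ ^ 2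
  have hσ2 : σ2 = ∑ m ∈ T, q m * ((m : ℝ) - μ) ^ 2 := sum_mul_sq_sub_sq_sum_mul T q _ hq1
  have hσ2_nonneg : 0 ≤ σ2 := sum_mul_sq_sub_sq_sum_mul_nonneg T q _ hq0 hq1
  set v : ℝ≥0 := ⟨σ2 + 1 / 12, by positivity⟩
  have hv : (v : ℝ) = σ2 + 1 / 12 := rfl
  have hv0 : v ≠ 0 := by rw [← NNReal.coe_ne_zero, hv]; positivity
  set g := gaussianPDFReal (μ + 1 / 2) v
  have hcell : ∀ m : ℤ, ∫ x in (m : ℝ)..m + 1, -log (g x) =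
      log (2 * π * v) / 2 + (((m : ℝ) - μ) ^ 2 + 1 / 12) / (2 * v) := by
    intro m
    simp_rw [g, neg_log_gaussianPDFReal _ hv0]
    have hquad : Continuous fun x : ℝ => (x - (μ + 1 / 2)) ^ 2 / (2 * v) := by fun_prop
    rw [intervalIntegral.integral_add intervalIntegrable_const (hquad.intervalIntegrable _ _),
      intervalIntegral.integral_const, intervalIntegral.integral_div, integral_sub_sq_unit_interval]
    simp only [add_sub_cancel_left, one_smul]
    ring_nf
  calc ∑ m ∈ T, negMulLog (q m)
      ≤ ∑ m ∈ T, q m * ∫ x in (m : ℝ)..m + 1, -log (g x) :=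
        sum_negMulLog_le_sum_mul_integral_neg_log (continuous_gaussianPDFReal _ _)
          (fun x => gaussianPDFReal_pos _ _ x hv0) (integrable_gaussianPDFReal _ _)
          (integral_gaussianPDFReal_eq_one _ hv0).le hq0 hq1
    _ = log (2 * π * v) / 2 + (σ2 + 1 / 12) / (2 * v) := by
        simp_rw [hcell, mul_add, sum_add_distrib, ← sum_mul, hq1, ← mul_div_assoc, ← sum_div,
          mul_add, sum_add_distrib, ← sum_mul, hq1, hσ2]
        ring
    _ = log (2 * π * v) / 2 + 1 / 2 := by
        rw [← hv]
        field_simp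
    _ = 1 / 2 * log (2 * π * exp 1 * (σ2 + 1 / 12)) := by
        rw [← hv, mul_right_comm _ (exp 1), log_mul (by positivity) (exp_pos 1).ne', log_exp]
        ring

section Marginal

variable {ι α : Type*} [DecidableEq α] (S : Finset (ι → α)) (p : (ι → α) → ℝ)

def marginal (i : ι) (a : α) : ℝ := ∑ x ∈ S with x i = a, p x

variable {S p}

lemma marginal_nonneg (hp0 : ∀ x ∈ S, 0 ≤ p x) (i : ι) (a : α) : 0 ≤ marginal S p i a :=
  sum_nonneg fun x hx => hp0 x (mem_filter.1 hx).1

lemma le_marginal (hp0 : ∀ x ∈ S, 0 ≤ p x) {x : ι → α} (hx : x ∈ S) (i : ι) :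
    p x ≤ marginal S p i (x i) :=
  single_le_sum (fun y hy => hp0 y (mem_filter.1 hy).1) (mem_filter.2 ⟨hx, rfl⟩)

lemma sum_marginal_mul (i : ι) (f : α → ℝ) :
    ∑ a ∈ S.image (· i), marginal S p i a * f a = ∑ x ∈ S, p x * f (x i) := by
  simp_rw [marginal, sum_mul]
  conv_rhs =>
    rw [← sum_fiberwise_of_maps_to fun x hx => mem_image_of_mem (fun y : ι → α => y i) hx]
  exact sum_congr rfl fun a _ => sum_congr rfl fun x hx => by rw [(mem_filter.1 hx).2]

lemma sum_marginal (hp1 : ∑ x ∈ S, p x = 1) (i : ι) :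
    ∑ a ∈ S.image (· i), marginal S p i a = 1 := by
  simpa [hp1] using sum_marginal_mul (S := S) (p := p) i fun _ => 1

variable [Fintype ι]

lemma sum_prod_marginal_le_one (hp0 : ∀ x ∈ S, 0 ≤ p x) (hp1 : ∑ x ∈ S, p x = 1) :
    ∑ x ∈ S, ∏ i, marginal S p i (x i) ≤ 1 := by
  classical
  calc ∑ x ∈ S, ∏ i, marginal S p i (x i)
      ≤ ∑ x ∈ Fintype.piFinset fun i => S.image (· i), ∏ i, marginal S p i (x i) :=
        sum_le_sum_of_subset_of_nonneg
          (fun x hx => Fintype.mem_piFinset.2 fun i => mem_image_of_mem (· i) hx)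
          fun x _ _ => prod_nonneg fun i _ => marginal_nonneg hp0 i (x i)
    _ = 1 := by rw [← prod_univ_sum]; simp [sum_marginal hp1]

lemma sum_mul_log_prod_marginal (hp0 : ∀ x ∈ S, 0 ≤ p x) :
    ∑ x ∈ S, p x * log (∏ i, marginal S p i (x i)) =
      -∑ i, ∑ a ∈ S.image (· i), negMulLog (marginal S p i a) := by
  calc ∑ x ∈ S, p x * log (∏ i, marginal S p i (x i))
      = ∑ x ∈ S, ∑ i, p x * log (marginal S p i (x i)) := by
        refine sum_congr rfl fun x hx => ?_
        rcases (hp0 x hx).eq_or_lt with hpx | hpx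
        · simp [← hpx]
        · rw [log_prod fun i _ => (hpx.trans_le (le_marginal hp0 hx i)).ne', mul_sum]
    _ = ∑ i, ∑ a ∈ S.image (· i), marginal S p i a * log (marginal S p i a) := by
        rw [sum_comm]
        exact sum_congr rfl fun i _ => (sum_marginal_mul i fun a => log (marginal S p i a)).symm
    _ = _ := by simp [negMulLog]

theorem sum_negMulLog_le_sum_negMulLog_marginal (hp0 : ∀ x ∈ S, 0 ≤ p x)
    (hp1 : ∑ x ∈ S, p x = 1) :
    ∑ x ∈ S, negMulLog (p x) ≤ ∑ i, ∑ a ∈ S.image (· i), negMulLog (marginal S p i a) := by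
  have hgibbs : ∑ x ∈ S, (negMulLog (p x) + p x * log (∏ i, marginal S p i (x i))) ≤
      ∑ x ∈ S, (∏ i, marginal S p i (x i) - p x) :=
    sum_le_sum fun x hx => negMulLog_add_mul_log_le_sub (hp0 x hx)
      (prod_nonneg fun i _ => marginal_nonneg hp0 i (x i)) fun hq => by
        obtain ⟨i, -, hi⟩ := prod_eq_zero_iff.1 hq
        exact le_antisymm (hi ▸ le_marginal hp0 hx i) (hp0 x hx)
  rw [sum_add_distrib, sum_sub_distrib, hp1, sum_mul_log_prod_marginal hp0] at hgibbs
  linarith [sum_prod_marginal_le_one hp0 hp1]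

end Marginal

lemma sum_log_le_card_mul_log_average {ι : Type*} [Fintype ι] [Nonempty ι] {a : ι → ℝ}
    (ha : ∀ i, 0 < a i) :
    ∑ i, log (a i) ≤ Fintype.card ι * log ((∑ i, a i) / Fintype.card ι) := by
  have hcard : (0 : ℝ) < Fintype.card ι := by exact_mod_cast Fintype.card_pos
  have h := strictConcaveOn_log_Ioi.concaveOn.le_map_sum (t := univ)
    (w := fun _ => (Fintype.card ι : ℝ)⁻¹) (p := a) (fun _ _ => by positivity)
    (by simp [hcard.ne']) fun i _ => ha i
  simp only [smul_eq_mul, inv_mul_eq_div, ← sum_div] at h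
  rwa [div_le_iff₀' hcard] at h

theorem entropy_le_gaussian_bound_general (n : ℕ) (hn : 0 < n)
    (S : Finset (Fin n → ℤ)) (p : (Fin n → ℤ) → ℝ)
    (hp0 : ∀ x, 0 ≤ p x) (hp1 : ∑ x ∈ S, p x = 1) :
    -∑ x ∈ S, p x * Real.logb 2 (p x) ≤
      (n / 2 : ℝ) * Real.logb 2 (2 * Real.pi * Real.exp 1 *
        ((1 / n) * ∑ i : Fin n,
            ((∑ x ∈ S, p x * ((x i : ℝ)) ^ 2) - (∑ x ∈ S, p x * (x i : ℝ)) ^ 2) +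
          1 / 12)) := by
  have hp0' : ∀ x ∈ S, 0 ≤ p x := fun x _ => hp0 x
  set V : Fin n → ℝ := fun i => ∑ x ∈ S, p x * (x i : ℝ) ^ 2 - (∑ x ∈ S, p x * (x i : ℝ)) ^ 2
  have hcoord : ∀ i, ∑ a ∈ S.image (· i), negMulLog (marginal S p i a) ≤
      1 / 2 * log (2 * π * exp 1 * (V i + 1 / 12)) := fun i => by
    simpa only [sum_marginal_mul] using
      sum_negMulLog_le_half_log_variance (fun a _ => marginal_nonneg hp0' i a)
        (sum_marginal hp1 i)
  have hpos : ∀ i, 0 < 2 * π * exp 1 * (V i + 1 / 12) := fun i => by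
    have := sum_mul_sq_sub_sq_sum_mul_nonneg S p (fun x => (x i : ℝ)) hp0' hp1
    positivity
  have : Nonempty (Fin n) := ⟨⟨0, hn⟩⟩
  have hn0 : (n : ℝ) ≠ 0 := by positivity
  have hbits : -∑ x ∈ S, p x * logb 2 (p x) = (∑ x ∈ S, negMulLog (p x)) / log 2 := by
    rw [← sum_neg_distrib, sum_div]
    exact sum_congr rfl fun x _ => by rw [logb, negMulLog]; ring
  rw [hbits, logb, ← mul_div_assoc, div_le_div_iff_of_pos_right (log_pos one_lt_two)]
  calc ∑ x ∈ S, negMulLog (p x)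
      ≤ ∑ i, ∑ a ∈ S.image (· i), negMulLog (marginal S p i a) :=
        sum_negMulLog_le_sum_negMulLog_marginal hp0' hp1
    _ ≤ 1 / 2 * ∑ i, log (2 * π * exp 1 * (V i + 1 / 12)) := by
        rw [mul_sum]; exact sum_le_sum fun i _ => hcoord i
    _ ≤ 1 / 2 * (n * log ((∑ i, 2 * π * exp 1 * (V i + 1 / 12)) / n)) := by
        gcongr
        simpa using sum_log_le_card_mul_log_average hpos
    _ = n / 2 * log (2 * π * exp 1 * (1 / n * ∑ i, V i + 1 / 12)) := by
        rw [← mul_sum, sum_add_distrib, sum_const, card_univ, Fintype.card_fin, nsmul_eq_mul]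
        field_simp

/-- Lemma 8 of the paper: an integer-valued random vector `X = (X₁,…,Xₙ)` taking
finitely many values (given here by a probability mass function `p` supported on
the finite set `S ⊆ ℤⁿ`) has Shannon entropy (in bits) at most
`(n/2) log₂[2πe((1/n)∑ᵢ Var(Xᵢ) + 1/12)]`, where `Var(Xᵢ) = E(Xᵢ²) - (E Xᵢ)²`. -/
theorem entropy_le_gaussian_bound (n : ℕ) (hn : 0 < n)
    (S : Finset (Fin n → ℤ)) (p : (Fin n → ℤ) → ℝ)
    (hp0 : ∀ x, 0 ≤ p x) (hp1 : ∑ x ∈ S, p x = 1) (hps : ∀ x ∉ S, p x = 0) :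
    -∑ x ∈ S, p x * Real.logb 2 (p x) ≤
      (n / 2 : ℝ) * Real.logb 2 (2 * Real.pi * Real.exp 1 *
        ((1 / n) * ∑ i : Fin n,
            ((∑ x ∈ S, p x * ((x i : ℝ)) ^ 2) - (∑ x ∈ S, p x * (x i : ℝ)) ^ 2) +
          1 / 12)) :=
  entropy_le_gaussian_bound_general n hn S p hp0 hp1
end

section
/- Let A₁ = {0,1}, A₂ = {0,2,4}, A₃ = {0,2} and let L ≥ 1 be an integer. For mᵢ = (m_{i,1},…,m_{i,L}) with m_{i,ℓ} ∈ Aᵢ, set xᵢ = Σ_{ℓ=1}^L m_{i,ℓ}·8^{ℓ−1}. Then: (a) if (m₁,m₂,m₃) and (m₁',m₂',m₃') satisfy x₁+x₂+x₃ = x₁'+x₂'+x₃', then m₁ = m₁'; (b) if they satisfy 2x₂+x₃ = 2x₂'+x₃', then m₂ = m₂'; and (c) x₃ determines m₃. In particular, the map (m₁,m₂,m₃) ↦ (x₁+x₂+x₃, 2x₂+x₃, x₃) is injective on A₁^L × A₂^L × A₃^L. -/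
/-!
Write `xᵢ = levelEnc mᵢ`. Since `A₁ + A₂ + A₃ ⊆ {0, …, 7}`, the base-8 digits of `x₁ + x₂ + x₃` are
the sums `m₁ℓ + m₂ℓ + m₃ℓ`, and `m₁ℓ` is the parity of that digit. Since `A₂ + A₃ / 2 ⊆ {0, …, 5}`,
the base-8 digits of `(2x₂ + x₃) / 2` are `m₂ℓ + m₃ℓ / 2`, from which `m₂ℓ ∈ {0, 2, 4}` is recovered
by rounding down to an even number. Finally the digits of `x₃` are the `m₃ℓ` themselves.
-/

namespace GIFC

/-- The multi-level (base `8`) encoding `x = ∑_{ℓ} m_ℓ 8^ℓ` of a vector of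
per-level messages `m : Fin L → ℕ`. -/
def levelEnc {L : ℕ} (m : Fin L → ℕ) : ℕ := ∑ ℓ, m ℓ * 8 ^ (ℓ : ℕ)

section levelEnc

variable {L : ℕ}

lemma levelEnc_eq_ofDigits (m : Fin L → ℕ) : levelEnc m = Nat.ofDigits 8 (List.ofFn m) := by
  simp only [levelEnc, Nat.ofDigits_eq_sum_mapIdx, List.mapIdx_eq_ofFn, List.get_ofFn,
    List.length_ofFn, List.sum_ofFn, Fin.val_cast]
  rfl

lemma eq_of_levelEnc_eq_of_lt_eight {a b : Fin L → ℕ} (ha : ∀ ℓ, a ℓ < 8) (hb : ∀ ℓ, b ℓ < 8)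
    (h : levelEnc a = levelEnc b) : a = b := by
  rw [levelEnc_eq_ofDigits, levelEnc_eq_ofDigits] at h
  refine List.ofFn_injective (Nat.ofDigits_inj_of_len_eq (by norm_num) ?_ ?_ ?_ h)
  · simp only [List.length_ofFn]
  · simpa only [List.mem_ofFn, forall_exists_index, forall_apply_eq_imp_iff] using ha
  · simpa only [List.mem_ofFn, forall_exists_index, forall_apply_eq_imp_iff] using hb

lemma levelEnc_add (a b : Fin L → ℕ) : levelEnc (a + b) = levelEnc a + levelEnc b := by
  simp only [levelEnc, Pi.add_apply, add_mul, Finset.sum_add_distrib]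

lemma levelEnc_smul (c : ℕ) (a : Fin L → ℕ) : levelEnc (c • a) = c * levelEnc a := by
  simp only [levelEnc, Pi.smul_apply, smul_eq_mul, Finset.mul_sum, mul_assoc]

lemma two_mul_levelEnc_add_of_even {a b : Fin L → ℕ} (hb : ∀ ℓ, Even (b ℓ)) :
    2 * levelEnc a + levelEnc b = 2 * levelEnc (a + fun ℓ => b ℓ / 2) := by
  rw [← levelEnc_smul, ← levelEnc_add, ← levelEnc_smul]
  congr 1
  funext ℓ
  simp only [Pi.add_apply, Pi.smul_apply, smul_eq_mul]
  have := Nat.two_mul_div_two_of_even (hb ℓ)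
  omega

end levelEnc

section alphabets

variable {a b c : ℕ}

lemma digit_lt_and_parity (ha : a ∈ ({0, 1} : Set ℕ)) (hb : b ∈ ({0, 2, 4} : Set ℕ))
    (hc : c ∈ ({0, 2} : Set ℕ)) : a + b + c < 8 ∧ (a + b + c) % 2 = a := by
  simp only [Set.mem_insert_iff, Set.mem_singleton_iff] at ha hb hc
  omega

lemma digit_lt_and_even_part (hb : b ∈ ({0, 2, 4} : Set ℕ)) (hc : c ∈ ({0, 2} : Set ℕ)) :
    b + c / 2 < 8 ∧ 2 * ((b + c / 2) / 2) = b := by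
  simp only [Set.mem_insert_iff, Set.mem_singleton_iff] at hb hc
  omega

lemma even_of_mem_zero_two (hc : c ∈ ({0, 2} : Set ℕ)) : Even c := by
  simp only [Set.mem_insert_iff, Set.mem_singleton_iff] at hc
  rcases hc with rfl | rfl <;> decide

lemma lt_eight_of_mem_zero_two (hc : c ∈ ({0, 2} : Set ℕ)) : c < 8 := by
  simp only [Set.mem_insert_iff, Set.mem_singleton_iff] at hc
  omega

end alphabets

section decoding

variable {L : ℕ} {a b c a' b' c' : Fin L → ℕ}

theorem eq_of_levelEnc_sum_eq (ha : ∀ ℓ, a ℓ ∈ ({0, 1} : Set ℕ))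
    (hb : ∀ ℓ, b ℓ ∈ ({0, 2, 4} : Set ℕ)) (hc : ∀ ℓ, c ℓ ∈ ({0, 2} : Set ℕ))
    (ha' : ∀ ℓ, a' ℓ ∈ ({0, 1} : Set ℕ)) (hb' : ∀ ℓ, b' ℓ ∈ ({0, 2, 4} : Set ℕ))
    (hc' : ∀ ℓ, c' ℓ ∈ ({0, 2} : Set ℕ))
    (h : levelEnc a + levelEnc b + levelEnc c = levelEnc a' + levelEnc b' + levelEnc c') :
    a = a' := by
  have hd := fun ℓ => digit_lt_and_parity (ha ℓ) (hb ℓ) (hc ℓ)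
  have hd' := fun ℓ => digit_lt_and_parity (ha' ℓ) (hb' ℓ) (hc' ℓ)
  rw [← levelEnc_add, ← levelEnc_add, ← levelEnc_add, ← levelEnc_add] at h
  have hdigits := eq_of_levelEnc_eq_of_lt_eight (fun ℓ => (hd ℓ).1) (fun ℓ => (hd' ℓ).1) h
  funext ℓ
  rw [← (hd ℓ).2, ← (hd' ℓ).2]
  exact congrArg (· % 2) (congrFun hdigits ℓ)

theorem eq_of_two_mul_levelEnc_add_eq (hb : ∀ ℓ, b ℓ ∈ ({0, 2, 4} : Set ℕ))
    (hc : ∀ ℓ, c ℓ ∈ ({0, 2} : Set ℕ)) (hb' : ∀ ℓ, b' ℓ ∈ ({0, 2, 4} : Set ℕ))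
    (hc' : ∀ ℓ, c' ℓ ∈ ({0, 2} : Set ℕ))
    (h : 2 * levelEnc b + levelEnc c = 2 * levelEnc b' + levelEnc c') : b = b' := by
  have hd := fun ℓ => digit_lt_and_even_part (hb ℓ) (hc ℓ)
  have hd' := fun ℓ => digit_lt_and_even_part (hb' ℓ) (hc' ℓ)
  rw [two_mul_levelEnc_add_of_even fun ℓ => even_of_mem_zero_two (hc ℓ),
    two_mul_levelEnc_add_of_even fun ℓ => even_of_mem_zero_two (hc' ℓ)] at h
  have hdigits := eq_of_levelEnc_eq_of_lt_eight (fun ℓ => (hd ℓ).1) (fun ℓ => (hd' ℓ).1)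
    (Nat.eq_of_mul_eq_mul_left two_pos h)
  funext ℓ
  rw [← (hd ℓ).2, ← (hd' ℓ).2]
  exact congrArg (fun d => 2 * (d / 2)) (congrFun hdigits ℓ)

end decoding

theorem multilevel_scheme_decodable_general (L : ℕ)
    (m m' : Fin 3 → Fin L → ℕ)
    (h1 : ∀ ℓ, m 0 ℓ ∈ ({0, 1} : Set ℕ))
    (h2 : ∀ ℓ, m 1 ℓ ∈ ({0, 2, 4} : Set ℕ))
    (h3 : ∀ ℓ, m 2 ℓ ∈ ({0, 2} : Set ℕ))
    (h1' : ∀ ℓ, m' 0 ℓ ∈ ({0, 1} : Set ℕ))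
    (h2' : ∀ ℓ, m' 1 ℓ ∈ ({0, 2, 4} : Set ℕ))
    (h3' : ∀ ℓ, m' 2 ℓ ∈ ({0, 2} : Set ℕ)) :
    (levelEnc (m 0) + levelEnc (m 1) + levelEnc (m 2) =
        levelEnc (m' 0) + levelEnc (m' 1) + levelEnc (m' 2) → m 0 = m' 0) ∧
    (2 * levelEnc (m 1) + levelEnc (m 2) =
        2 * levelEnc (m' 1) + levelEnc (m' 2) → m 1 = m' 1) ∧
    (levelEnc (m 2) = levelEnc (m' 2) → m 2 = m' 2) ∧
    ((levelEnc (m 0) + levelEnc (m 1) + levelEnc (m 2),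
        2 * levelEnc (m 1) + levelEnc (m 2), levelEnc (m 2)) =
      (levelEnc (m' 0) + levelEnc (m' 1) + levelEnc (m' 2),
        2 * levelEnc (m' 1) + levelEnc (m' 2), levelEnc (m' 2)) → m = m') := by
  have dec1 := eq_of_levelEnc_sum_eq h1 h2 h3 h1' h2' h3'
  have dec2 := eq_of_two_mul_levelEnc_add_eq h2 h3 h2' h3'
  have dec3 : levelEnc (m 2) = levelEnc (m' 2) → m 2 = m' 2 :=
    eq_of_levelEnc_eq_of_lt_eight (fun ℓ => lt_eight_of_mem_zero_two (h3 ℓ))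
      (fun ℓ => lt_eight_of_mem_zero_two (h3' ℓ))
  refine ⟨dec1, dec2, dec3, fun h => ?_⟩
  simp only [Prod.mk.injEq] at h
  funext i
  fin_cases i
  exacts [dec1 h.1, dec2 h.2.1, dec3 h.2.2]

/-- Decodability of the multi-level interference-alignment scheme with per-level
alphabets `A₁ = {0,1}`, `A₂ = {0,2,4}`, `A₃ = {0,2}` and base `Q = 8`:
(a) `x₁+x₂+x₃` determines `m₁`; (b) `2x₂+x₃` determines `m₂`; (c) `x₃` determines
`m₃`; in particular `(m₁,m₂,m₃) ↦ (x₁+x₂+x₃, 2x₂+x₃, x₃)` is injective. -/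
theorem multilevel_scheme_decodable (L : ℕ) (hL : 1 ≤ L)
    (m m' : Fin 3 → Fin L → ℕ)
    (h1 : ∀ ℓ, m 0 ℓ ∈ ({0, 1} : Set ℕ))
    (h2 : ∀ ℓ, m 1 ℓ ∈ ({0, 2, 4} : Set ℕ))
    (h3 : ∀ ℓ, m 2 ℓ ∈ ({0, 2} : Set ℕ))
    (h1' : ∀ ℓ, m' 0 ℓ ∈ ({0, 1} : Set ℕ))
    (h2' : ∀ ℓ, m' 1 ℓ ∈ ({0, 2, 4} : Set ℕ))
    (h3' : ∀ ℓ, m' 2 ℓ ∈ ({0, 2} : Set ℕ)) :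
    (levelEnc (m 0) + levelEnc (m 1) + levelEnc (m 2) =
        levelEnc (m' 0) + levelEnc (m' 1) + levelEnc (m' 2) → m 0 = m' 0) ∧
    (2 * levelEnc (m 1) + levelEnc (m 2) =
        2 * levelEnc (m' 1) + levelEnc (m' 2) → m 1 = m' 1) ∧
    (levelEnc (m 2) = levelEnc (m' 2) → m 2 = m' 2) ∧
    ((levelEnc (m 0) + levelEnc (m 1) + levelEnc (m 2),
        2 * levelEnc (m 1) + levelEnc (m 2), levelEnc (m 2)) =
      (levelEnc (m' 0) + levelEnc (m' 1) + levelEnc (m' 2),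
        2 * levelEnc (m' 1) + levelEnc (m' 2), levelEnc (m' 2)) → m = m') :=
  multilevel_scheme_decodable_general L m m' h1 h2 h3 h1' h2' h3'

end GIFC
end
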